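/- arXiv:2401.07474 — 4 statements merged into one kernel-verified Lean document; each statement's English description precedes it below -/
import Mathlib

section
/- Let n ≥ 1, f ∈ 𝒮(ℝⁿ×ℝⁿ; ℂ), ℏ ∈ ℝ, and j ∈ {1,…,n}. Then for every φ ∈ 𝒮(ℝⁿ; ℂ) and x ∈ ℝⁿ, the commutator of ρ_ℏ(f̂) with multiplication by the coordinate x_j satisfies x_j·(ρ_ℏ(f̂)φ)(x) − (ρ_ℏ(f̂)(x_j φ))(x) = −(ℏ/i)·(ρ_ℏ((∂f/∂ξ_j)^∧)φ)(x), where ∂f/∂ξ_j is the partial derivative of f in the j-th coordinate of the second variable and x_jφ denotes pointwise multiplication by the j-th coordinate. -/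
/-! Taking the Fourier transform in `ξ` turns `∂/∂ξ_j` into multiplication by `i y_j`, so
`fhat (∂f/∂ξ_j) x y = i y_j · fhat f x y`. In the commutator the factor `x_j` meets
`(x + ℏ y)_j = x_j + ℏ y_j` inside the integral defining `ρ_ℏ`, leaving `-ℏ y_j`, which is
`-(ℏ / i) · i y_j`. -/

open MeasureTheory RealInnerProductSpace

/-- Fourier transform in the second variable:
`f̂(x,y) = ∫ f(x,ξ) e^{−i⟨y,ξ⟩} dξ`. -/
noncomputable def fhat {n : ℕ}
    (f : EuclideanSpace ℝ (Fin n) × EuclideanSpace ℝ (Fin n) → ℂ)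
    (x y : EuclideanSpace ℝ (Fin n)) : ℂ :=
  ∫ ξ : EuclideanSpace ℝ (Fin n),
    f (x, ξ) * Complex.exp (-(Complex.I * ((⟪y, ξ⟫ : ℝ) : ℂ)))

/-- The operator `ρ_ℏ(F)`: `(ρ_ℏ(F)φ)(x) = (2π)^{−n} ∫ F(x,y) φ(x + ℏy) dy`. -/
noncomputable def rho {n : ℕ} (ℏ : ℝ)
    (F : EuclideanSpace ℝ (Fin n) → EuclideanSpace ℝ (Fin n) → ℂ)
    (φ : EuclideanSpace ℝ (Fin n) → ℂ) (x : EuclideanSpace ℝ (Fin n)) : ℂ :=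
  (((2 * Real.pi) ^ n : ℝ) : ℂ)⁻¹ * ∫ y : EuclideanSpace ℝ (Fin n), F x y * φ (x + ℏ • y)

open FourierTransform SchwartzMap LineDeriv

section Slice

variable {D E V : Type*} [NormedAddCommGroup D] [NormedSpace ℝ D]
  [NormedAddCommGroup E] [NormedSpace ℝ E] [NormedAddCommGroup V] [NormedSpace ℝ V]

theorem Function.hasTemperateGrowth_prodMk_left (x : D) :
    (fun ξ : E => (x, ξ)).HasTemperateGrowth := by
  have h := (HasTemperateGrowth.const ((x, 0) : D × E)).add
    (ContinuousLinearMap.inr ℝ D E).hasTemperateGrowth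
  convert h using 2 with ξ
  simp

namespace SchwartzMap

noncomputable def sliceCLM (x : D) : 𝓢(D × E, V) →L[ℝ] 𝓢(E, V) :=
  compCLM ℝ (Function.hasTemperateGrowth_prodMk_left x)
    ⟨1, 1, fun ξ => by
      have : ‖ξ‖ ≤ ‖(x, ξ)‖ := le_max_right _ _
      linarith [norm_nonneg (x, ξ)]⟩

@[simp]
theorem sliceCLM_apply (x : D) (f : 𝓢(D × E, V)) (ξ : E) : sliceCLM x f ξ = f (x, ξ) :=
  rfl

theorem lineDerivOp_sliceCLM (x : D) (v : E) (f : 𝓢(D × E, V)) :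
    ∂_{v} (sliceCLM x f) = sliceCLM x (∂_{((0 : D), v)} f) := by
  ext ξ
  have hslice : HasFDerivAt (fun ξ : E => (x, ξ)) (ContinuousLinearMap.inr ℝ D E) ξ :=
    (hasFDerivAt_const x ξ).prodMk (hasFDerivAt_id ξ)
  simp [lineDerivOp_apply_eq_fderiv, sliceCLM,
    (f.differentiableAt.hasFDerivAt.comp ξ hslice).fderiv]

end SchwartzMap

end Slice

theorem MeasureTheory.Integrable.mul_comp_add_smul {E : Type*} [NormedAddCommGroup E]
    [NormedSpace ℝ E] [MeasurableSpace E] [BorelSpace E] {μ : Measure E} {ψ : E → ℂ}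
    (hψ : Integrable ψ μ) (φ : 𝓢(E, ℂ)) (x : E) (ℏ : ℝ) :
    Integrable (fun y => ψ y * φ (x + ℏ • y)) μ :=
  hψ.mul_bdd (by fun_prop : Continuous fun y => φ (x + ℏ • y)).aestronglyMeasurable
    (Filter.Eventually.of_forall fun _ => φ.norm_le_seminorm ℝ _)

section Euclidean

open Real

variable {n : ℕ}

local notation "ℝⁿ" => EuclideanSpace ℝ (Fin n)

theorem fhat_eq_fourier_sliceCLM (f : 𝓢(ℝⁿ × ℝⁿ, ℂ)) (x y : ℝⁿ) :
    fhat f x y = 𝓕 (sliceCLM x f) ((2 * π)⁻¹ • y) := by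
  rw [fourier_coe, Real.fourier_eq']
  refine integral_congr_ae (Filter.Eventually.of_forall fun ξ => ?_)
  have hphase : -2 * π * ⟪ξ, (2 * π)⁻¹ • y⟫ = -⟪y, ξ⟫ := by
    rw [real_inner_smul_right, real_inner_comm]
    field_simp
  simp only [sliceCLM_apply, hphase, smul_eq_mul]
  push_cast
  ring_nf

theorem fhat_lineDerivOp (f : 𝓢(ℝⁿ × ℝⁿ, ℂ)) (v x y : ℝⁿ) :
    fhat ⇑(∂_{((0 : ℝⁿ), v)} f : 𝓢(ℝⁿ × ℝⁿ, ℂ)) x y = Complex.I * ⟪y, v⟫ * fhat f x y := by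
  rw [fhat_eq_fourier_sliceCLM, fhat_eq_fourier_sliceCLM, ← lineDerivOp_sliceCLM,
    fourier_lineDerivOp_eq, smul_apply, smulLeftCLM_apply_apply (by fun_prop),
    real_inner_smul_left, Complex.real_smul, smul_eq_mul, real_inner_comm]
  push_cast
  field_simp

theorem integrable_fhat (f : 𝓢(ℝⁿ × ℝⁿ, ℂ)) (x : ℝⁿ) : Integrable (fhat f x) := by
  simp_rw [funext (fhat_eq_fourier_sliceCLM f x)]
  exact (𝓕 (sliceCLM x f)).integrable.comp_smul (by positivity)

end Euclidean

theorem statement5_general (n : ℕ)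
    (f : SchwartzMap (EuclideanSpace ℝ (Fin n) × EuclideanSpace ℝ (Fin n)) ℂ)
    (ℏ : ℝ) (j : Fin n) (φ : SchwartzMap (EuclideanSpace ℝ (Fin n)) ℂ) :
    ∀ x : EuclideanSpace ℝ (Fin n),
      ((x j : ℝ) : ℂ) * rho ℏ (fhat ⇑f) ⇑φ x
        - rho ℏ (fhat ⇑f) (fun x' => ((x' j : ℝ) : ℂ) * φ x') x
      = -((ℏ : ℂ) / Complex.I) *
          rho ℏ (fhat (fun p => fderiv ℝ ⇑f p (0, EuclideanSpace.single j 1))) ⇑φ x := by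
  intro x
  set fj : 𝓢(_, ℂ) := ∂_{((0 : EuclideanSpace ℝ (Fin n)), EuclideanSpace.single j (1 : ℝ))} f
  have hfhat_deriv : ∀ y, fhat fj x y = Complex.I * y j * fhat f x y := fun y => by
    rw [fhat_lineDerivOp, EuclideanSpace.inner_single_right, conj_trivial, one_mul]
  have hsplit : ∀ y, fhat f x y * (((x + ℏ • y) j : ℝ) * φ (x + ℏ • y))
      = x j * (fhat f x y * φ (x + ℏ • y)) + ℏ / Complex.I * (fhat fj x y * φ (x + ℏ • y)) :=
    fun y => by
      rw [hfhat_deriv, PiLp.add_apply, PiLp.smul_apply, smul_eq_mul]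
      push_cast
      field_simp
  have hA := (integrable_fhat f x).mul_comp_add_smul φ x ℏ
  have hC := (integrable_fhat fj x).mul_comp_add_smul φ x ℏ
  change _ = _ * rho ℏ (fhat fj) φ x
  simp only [rho, hsplit, integral_add (hA.const_mul _) (hC.const_mul _), integral_const_mul]
  ring

/-- For Schwartz `f` on `ℝⁿ×ℝⁿ`, `ℏ ∈ ℝ`, `j ∈ {1,…,n}`, every Schwartz
`φ` and every `x`, the commutator of `ρ_ℏ(f̂)` with multiplication by the coordinate `x_j`
satisfies `x_j·(ρ_ℏ(f̂)φ)(x) − (ρ_ℏ(f̂)(x_jφ))(x) = −(ℏ/i)·(ρ_ℏ((∂f/∂ξ_j)^)φ)(x)`. -/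
theorem statement5 (n : ℕ) (hn : 1 ≤ n)
    (f : SchwartzMap (EuclideanSpace ℝ (Fin n) × EuclideanSpace ℝ (Fin n)) ℂ)
    (ℏ : ℝ) (j : Fin n) (φ : SchwartzMap (EuclideanSpace ℝ (Fin n)) ℂ) :
    ∀ x : EuclideanSpace ℝ (Fin n),
      ((x j : ℝ) : ℂ) * rho ℏ (fhat ⇑f) ⇑φ x
        - rho ℏ (fhat ⇑f) (fun x' => ((x' j : ℝ) : ℂ) * φ x') x
      = -((ℏ : ℂ) / Complex.I) *
          rho ℏ (fhat (fun p => fderiv ℝ ⇑f p (0, EuclideanSpace.single j 1))) ⇑φ x :=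
  statement5_general n f ℏ j φ
end

section
/- Let d, k ≥ 1, m > 0, C > 0, R > 0, and let a : ℝᵈ → M_k(ℂ) be a continuous matrix-valued function such that for all z with ‖z‖ ≥ R, the matrix a(z)ᴴa(z) − C‖z‖^{2m}·1 is positive semidefinite (ellipticity of positive order m). Then the truncated graph projection ê_a(z) = e_{a(z)} − [[0,0],[0,1]], with blocks (1+aᴴa)⁻¹, (1+aᴴa)⁻¹aᴴ, a(1+aᴴa)⁻¹, and a(1+aᴴa)⁻¹aᴴ − 1, tends to 0 as ‖z‖ → ∞; that is, each of the four blocks (1+a(z)ᴴa(z))⁻¹, (1+a(z)ᴴa(z))⁻¹a(z)ᴴ, a(z)(1+a(z)ᴴa(z))⁻¹, and a(z)(1+a(z)ᴴa(z))⁻¹a(z)ᴴ − 1 converges to the zero matrix as ‖z‖ → ∞. -/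
open Matrix Filter
open scoped ComplexOrder

/-!
Write `A = a z`. Ellipticity says `r ‖x‖ ≤ ‖A x‖` with `r = √(C ‖z‖^(2m)) → ∞`. For
`S = (1 + A†A)⁻¹` and `w = S v` one has `‖w‖² + ‖A w‖² = re ⟪w, v⟫`, which gives
`‖S‖ ≤ r⁻²` and `‖A S‖, ‖S A†‖ ≤ r⁻¹`. Finally `A† (A S A† - 1) = -S A†`, and in finite
dimension `A†` inherits the lower bound `r` from `A`, so `‖A S A† - 1‖ ≤ r⁻²`.
-/

open scoped InnerProductSpace

theorem mul_le_of_mul_mul_self_le_mul {a b x : ℝ} (hb : 0 ≤ b) (hx : 0 ≤ x)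
    (h : a * x * x ≤ b * x) : a * x ≤ b := by
  rcases hx.eq_or_lt with rfl | hx
  · simpa using hb
  · exact le_of_mul_le_mul_right h hx

namespace ContinuousLinearMap

variable {𝕜 E : Type*} [RCLike 𝕜] [NormedAddCommGroup E] [InnerProductSpace 𝕜 E] [CompleteSpace E]
  {A S : E →L[𝕜] E} {r : ℝ}

theorem norm_sq_add_norm_apply_sq_eq_re_inner {v w : E} (h : w + star A (A w) = v) :
    ‖w‖ ^ 2 + ‖A w‖ ^ 2 = RCLike.re ⟪w, v⟫_𝕜 := by
  rw [← h, inner_add_right, map_add, star_eq_adjoint, adjoint_inner_right,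
    inner_self_eq_norm_sq, inner_self_eq_norm_sq]

theorem norm_sq_add_norm_apply_sq_le {v w : E} (h : w + star A (A w) = v) :
    ‖w‖ ^ 2 + ‖A w‖ ^ 2 ≤ ‖w‖ * ‖v‖ :=
  (norm_sq_add_norm_apply_sq_eq_re_inner h).trans_le <|
    (RCLike.re_le_norm _).trans (norm_inner_le_norm _ _)

theorem le_norm_star_apply_of_le_norm_apply [FiniteDimensional 𝕜 E] (hr : 0 < r)
    (hA : ∀ x, r * ‖x‖ ≤ ‖A x‖) (u : E) : r * ‖u‖ ≤ ‖star A u‖ := by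
  have hinj : Function.Injective A := by
    refine (injective_iff_map_eq_zero A).2 fun x hx => norm_eq_zero.1 ?_
    have := hA x
    rw [hx, norm_zero] at this
    nlinarith [norm_nonneg x]
  -- In finite dimension `A` is onto, and `‖A x‖² = re ⟪x, A† (A x)⟫` transfers the bound.
  obtain ⟨x, rfl⟩ : ∃ x, A x = u :=
    (LinearMap.injective_iff_surjective (f := (A : E →ₗ[𝕜] E))).1 hinj u
  have hsq : ‖A x‖ ^ 2 ≤ ‖x‖ * ‖star A (A x)‖ := by
    rw [← inner_self_eq_norm_sq (𝕜 := 𝕜), ← adjoint_inner_right, ← star_eq_adjoint]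
    exact (RCLike.re_le_norm _).trans (norm_inner_le_norm _ _)
  refine mul_le_of_mul_mul_self_le_mul (norm_nonneg _) (norm_nonneg _) ?_
  nlinarith [hA x, norm_nonneg (star A (A x))]

theorem apply_add_star_apply_apply (hS : (1 + star A * A) * S = 1) (v : E) :
    S v + star A (A (S v)) = v := by
  simpa using congr($hS v)

theorem norm_resolvent_le (hr : 0 < r) (hA : ∀ x, r * ‖x‖ ≤ ‖A x‖)
    (hS : (1 + star A * A) * S = 1) : ‖S‖ ≤ (r ^ 2)⁻¹ := by
  refine opNorm_le_bound _ (by positivity) fun v => ?_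
  have h := norm_sq_add_norm_apply_sq_le (apply_add_star_apply_apply hS v)
  have hlow : (r * ‖S v‖) ^ 2 ≤ ‖A (S v)‖ ^ 2 := by gcongr; exact hA _
  rw [le_inv_mul_iff₀ (by positivity)]
  exact mul_le_of_mul_mul_self_le_mul (norm_nonneg _) (norm_nonneg _) (by nlinarith)

theorem norm_mul_resolvent_le (hr : 0 < r) (hA : ∀ x, r * ‖x‖ ≤ ‖A x‖)
    (hS : (1 + star A * A) * S = 1) : ‖A * S‖ ≤ r⁻¹ := by
  refine opNorm_le_bound _ (by positivity) fun v => ?_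
  have h := norm_sq_add_norm_apply_sq_le (apply_add_star_apply_apply hS v)
  have hlow := hA (S v)
  rw [mul_apply_eq_comp, le_inv_mul_iff₀ hr]
  exact mul_le_of_mul_mul_self_le_mul (norm_nonneg _) (norm_nonneg _)
    (by nlinarith [norm_nonneg v])

theorem mul_norm_resolvent_star_apply_le (hA : ∀ x, r * ‖x‖ ≤ ‖A x‖)
    (hS : (1 + star A * A) * S = 1) (u : E) : r * ‖S (star A u)‖ ≤ ‖u‖ := by
  have h := norm_sq_add_norm_apply_sq_eq_re_inner (apply_add_star_apply_apply hS (star A u))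
  rw [star_eq_adjoint, adjoint_inner_right, ← star_eq_adjoint] at h
  have hle : ‖A (S (star A u))‖ ≤ ‖u‖ := by
    refine (one_mul _).symm.trans_le <| mul_le_of_mul_mul_self_le_mul (norm_nonneg _)
      (norm_nonneg _) ?_
    nlinarith [(RCLike.re_le_norm ⟪A (S (star A u)), u⟫_𝕜).trans (norm_inner_le_norm _ _)]
  exact (hA _).trans hle

theorem norm_resolvent_mul_star_le (hr : 0 < r) (hA : ∀ x, r * ‖x‖ ≤ ‖A x‖)
    (hS : (1 + star A * A) * S = 1) : ‖S * star A‖ ≤ r⁻¹ :=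
  opNorm_le_bound _ (by positivity) fun u => by
    rw [mul_apply_eq_comp, le_inv_mul_iff₀ hr]
    exact mul_norm_resolvent_star_apply_le hA hS u

theorem norm_mul_resolvent_mul_star_sub_one_le [FiniteDimensional 𝕜 E] (hr : 0 < r)
    (hA : ∀ x, r * ‖x‖ ≤ ‖A x‖) (hS : (1 + star A * A) * S = 1) :
    ‖A * S * star A - 1‖ ≤ (r ^ 2)⁻¹ := by
  refine opNorm_le_bound _ (by positivity) fun u => ?_
  have hw := eq_sub_of_add_eq' (apply_add_star_apply_apply hS (star A u))
  have hstar : star A (A (S (star A u)) - u) = -S (star A u) := by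
    rw [map_sub, hw, sub_sub_cancel_left]
  have h1 := le_norm_star_apply_of_le_norm_apply hr hA (A (S (star A u)) - u)
  rw [hstar, norm_neg] at h1
  have h2 := mul_norm_resolvent_star_apply_le hA hS u
  rw [_root_.sub_apply, mul_apply_eq_comp, mul_apply_eq_comp, one_apply_eq_self,
    le_inv_mul_iff₀ (by positivity)]
  nlinarith

end ContinuousLinearMap

namespace Matrix

section L2OperatorNorm

open scoped Matrix.Norms.L2Operator

variable {𝕜 n : Type*} [RCLike 𝕜] [Fintype n] [DecidableEq n] {M : Matrix n n 𝕜} {c : ℝ}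

theorem le_norm_toEuclideanCLM_apply (hM : (Mᴴ * M - (c : 𝕜) • 1).PosSemidef)
    (x : EuclideanSpace 𝕜 n) : √c * ‖x‖ ≤ ‖toEuclideanCLM (𝕜 := 𝕜) M x‖ := by
  have h := (isPositive_toEuclideanLin_iff.2 hM).re_inner_nonneg_left x
  rw [← coe_toEuclideanCLM_eq_toEuclideanLin, ContinuousLinearMap.coe_coe, ← star_eq_conjTranspose,
    map_sub, map_mul, map_smul, map_one, map_star, _root_.sub_apply, inner_sub_left,
    mul_apply_eq_comp, ContinuousLinearMap.star_eq_adjoint, ContinuousLinearMap.adjoint_inner_left,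
    _root_.smul_apply, one_apply_eq_self, inner_smul_left, map_sub,
    inner_self_eq_norm_sq, inner_self_eq_norm_sq_to_K, RCLike.conj_ofReal, ← RCLike.ofReal_pow,
    ← RCLike.ofReal_mul, RCLike.ofReal_re, sub_nonneg] at h
  calc √c * ‖x‖ = √(c * ‖x‖ ^ 2) := by
        rw [Real.sqrt_mul' _ (by positivity), Real.sqrt_sq (norm_nonneg _)]
    _ ≤ √(‖toEuclideanCLM (𝕜 := 𝕜) M x‖ ^ 2) := Real.sqrt_le_sqrt h
    _ = ‖toEuclideanCLM (𝕜 := 𝕜) M x‖ := Real.sqrt_sq (norm_nonneg _)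

theorem one_add_star_mul_self_mul_toEuclideanCLM_inv :
    (1 + star (toEuclideanCLM (𝕜 := 𝕜) M) * toEuclideanCLM (𝕜 := 𝕜) M) *
      toEuclideanCLM (𝕜 := 𝕜) (1 + Mᴴ * M)⁻¹ = 1 := by
  have hunit : IsUnit (1 + Mᴴ * M).det :=
    (isUnit_iff_isUnit_det _).1
      (PosDef.one.add_posSemidef (posSemidef_conjTranspose_mul_self M)).isUnit
  rw [← map_star, ← map_one (toEuclideanCLM (𝕜 := 𝕜) (n := n)), ← map_mul, ← map_add, ← map_mul,
    star_eq_conjTranspose, mul_nonsing_inv _ hunit]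

theorem norm_graphProjection_blocks_le (hc : 0 < c) (hM : (Mᴴ * M - (c : 𝕜) • 1).PosSemidef) :
    ‖(1 + Mᴴ * M)⁻¹‖ ≤ c⁻¹ ∧ ‖(1 + Mᴴ * M)⁻¹ * Mᴴ‖ ≤ (√c)⁻¹ ∧
      ‖M * (1 + Mᴴ * M)⁻¹‖ ≤ (√c)⁻¹ ∧ ‖M * (1 + Mᴴ * M)⁻¹ * Mᴴ - 1‖ ≤ c⁻¹ := by
  have hr : 0 < √c := Real.sqrt_pos.2 hc
  have hA := le_norm_toEuclideanCLM_apply hM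
  have hS := one_add_star_mul_self_mul_toEuclideanCLM_inv (M := M)
  have hstar : toEuclideanCLM (𝕜 := 𝕜) Mᴴ = star (toEuclideanCLM (𝕜 := 𝕜) M) := map_star _ _
  refine ⟨?_, ?_, ?_, ?_⟩
  · rw [cstar_norm_def, ← Real.sq_sqrt hc.le]
    exact ContinuousLinearMap.norm_resolvent_le hr hA hS
  · rw [cstar_norm_def, map_mul, hstar]
    exact ContinuousLinearMap.norm_resolvent_mul_star_le hr hA hS
  · rw [cstar_norm_def, map_mul]
    exact ContinuousLinearMap.norm_mul_resolvent_le hr hA hS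
  · rw [cstar_norm_def, map_sub, map_mul, map_mul, hstar, map_one, ← Real.sq_sqrt hc.le]
    exact ContinuousLinearMap.norm_mul_resolvent_mul_star_sub_one_le hr hA hS

end L2OperatorNorm

theorem tendsto_graphProjection_blocks {𝕜 n α : Type*} [RCLike 𝕜] [Fintype n] [DecidableEq n]
    {l : Filter α} {M : α → Matrix n n 𝕜} {c : α → ℝ} (hc : Tendsto c l atTop)
    (hM : ∀ᶠ x in l, ((M x)ᴴ * M x - (c x : 𝕜) • 1).PosSemidef) :
    Tendsto (fun x => (1 + (M x)ᴴ * M x)⁻¹) l (nhds 0) ∧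
      Tendsto (fun x => (1 + (M x)ᴴ * M x)⁻¹ * (M x)ᴴ) l (nhds 0) ∧
      Tendsto (fun x => M x * (1 + (M x)ᴴ * M x)⁻¹) l (nhds 0) ∧
      Tendsto (fun x => M x * (1 + (M x)ᴴ * M x)⁻¹ * (M x)ᴴ - 1) l (nhds 0) := by
  -- The L2 operator norm induces the product topology on matrices, so its bounds squeeze.
  open scoped Matrix.Norms.L2Operator in
  have hle := (hM.and (hc.eventually_gt_atTop 0)).mono fun x hx =>
    norm_graphProjection_blocks_le hx.2 hx.1
  have hinv : Tendsto (fun x => (c x)⁻¹) l (nhds 0) := tendsto_inv_atTop_zero.comp hc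
  have hsqrt : Tendsto (fun x => (√(c x))⁻¹) l (nhds 0) :=
    tendsto_inv_atTop_zero.comp (Real.tendsto_sqrt_atTop.comp hc)
  exact ⟨squeeze_zero_norm' (hle.mono fun _ h => h.1) hinv,
    squeeze_zero_norm' (hle.mono fun _ h => h.2.1) hsqrt,
    squeeze_zero_norm' (hle.mono fun _ h => h.2.2.1) hsqrt,
    squeeze_zero_norm' (hle.mono fun _ h => h.2.2.2) hinv⟩

end Matrix

theorem statement11_general (d k : ℕ) (m : ℝ) (hm : 0 < m)
    (C : ℝ) (hC : 0 < C) (R : ℝ)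
    (a : EuclideanSpace ℝ (Fin d) → Matrix (Fin k) (Fin k) ℂ)
    (hell : ∀ z : EuclideanSpace ℝ (Fin d), R ≤ ‖z‖ →
      ((a z)ᴴ * (a z) - ((C * ‖z‖ ^ (2 * m) : ℝ) : ℂ) • 1).PosSemidef) :
    Tendsto (fun z : EuclideanSpace ℝ (Fin d) => (1 + (a z)ᴴ * (a z))⁻¹)
        (Filter.comap (fun z : EuclideanSpace ℝ (Fin d) => ‖z‖) atTop) (nhds 0) ∧
    Tendsto (fun z : EuclideanSpace ℝ (Fin d) => (1 + (a z)ᴴ * (a z))⁻¹ * (a z)ᴴ)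
        (Filter.comap (fun z : EuclideanSpace ℝ (Fin d) => ‖z‖) atTop) (nhds 0) ∧
    Tendsto (fun z : EuclideanSpace ℝ (Fin d) => (a z) * (1 + (a z)ᴴ * (a z))⁻¹)
        (Filter.comap (fun z : EuclideanSpace ℝ (Fin d) => ‖z‖) atTop) (nhds 0) ∧
    Tendsto (fun z : EuclideanSpace ℝ (Fin d) =>
          (a z) * (1 + (a z)ᴴ * (a z))⁻¹ * (a z)ᴴ - 1)
        (Filter.comap (fun z : EuclideanSpace ℝ (Fin d) => ‖z‖) atTop) (nhds 0) := by
  have hnorm : Tendsto (fun z : EuclideanSpace ℝ (Fin d) => ‖z‖) (comap (‖·‖) atTop) atTop :=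
    tendsto_comap
  exact tendsto_graphProjection_blocks
    (((tendsto_rpow_atTop (by positivity)).const_mul_atTop hC).comp hnorm)
    ((hnorm.eventually_ge_atTop R).mono hell)

/-- Let `d, k ≥ 1`, `m > 0`, `C > 0`, `R > 0`, and let
`a : ℝᵈ → M_k(ℂ)` be continuous with `a(z)ᴴa(z) − C‖z‖^{2m}·1` positive semidefinite for
`‖z‖ ≥ R` (ellipticity of positive order `m`).  Then each of the four blocks of the
truncated graph projection `ê_a(z)`, namely `(1+aᴴa)⁻¹`, `(1+aᴴa)⁻¹aᴴ`, `a(1+aᴴa)⁻¹` and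
`a(1+aᴴa)⁻¹aᴴ − 1`, tends to the zero matrix as `‖z‖ → ∞`. -/
theorem statement11 (d k : ℕ) (hd : 1 ≤ d) (hk : 1 ≤ k) (m : ℝ) (hm : 0 < m)
    (C : ℝ) (hC : 0 < C) (R : ℝ) (hR : 0 < R)
    (a : EuclideanSpace ℝ (Fin d) → Matrix (Fin k) (Fin k) ℂ)
    (ha : Continuous a)
    (hell : ∀ z : EuclideanSpace ℝ (Fin d), R ≤ ‖z‖ →
      ((a z)ᴴ * (a z) - ((C * ‖z‖ ^ (2 * m) : ℝ) : ℂ) • 1).PosSemidef) :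
    Tendsto (fun z : EuclideanSpace ℝ (Fin d) => (1 + (a z)ᴴ * (a z))⁻¹)
        (Filter.comap (fun z : EuclideanSpace ℝ (Fin d) => ‖z‖) atTop) (nhds 0) ∧
    Tendsto (fun z : EuclideanSpace ℝ (Fin d) => (1 + (a z)ᴴ * (a z))⁻¹ * (a z)ᴴ)
        (Filter.comap (fun z : EuclideanSpace ℝ (Fin d) => ‖z‖) atTop) (nhds 0) ∧
    Tendsto (fun z : EuclideanSpace ℝ (Fin d) => (a z) * (1 + (a z)ᴴ * (a z))⁻¹)
        (Filter.comap (fun z : EuclideanSpace ℝ (Fin d) => ‖z‖) atTop) (nhds 0) ∧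
    Tendsto (fun z : EuclideanSpace ℝ (Fin d) =>
          (a z) * (1 + (a z)ᴴ * (a z))⁻¹ * (a z)ᴴ - 1)
        (Filter.comap (fun z : EuclideanSpace ℝ (Fin d) => ‖z‖) atTop) (nhds 0) :=
  statement11_general d k m hm C hC R a hell
end

section
/- Let K ∈ 𝒮(ℝ×ℝ; ℂ) be a Schwartz kernel that is idempotent under kernel composition: ∫_ℝ K(x,y)K(y,z) dy = K(x,z) for all x, z. Define the kernels (DK)(x,y) = (∂₁K)(x,y) + (∂₂K)(x,y) and (XK)(x,y) = (x − y)K(x,y), the composition (A∘B)(x,z) = ∫_ℝ A(x,y)B(y,z) dy, and the trace Tr(A) = ∫_ℝ A(x,x) dx. Then Tr(K ∘ DK ∘ XK) − Tr(K ∘ XK ∘ DK) = −Tr(K), i.e., ∫∫∫ K(x,y)(DK)(y,z)(XK)(z,x) dz dy dx − ∫∫∫ K(x,y)(XK)(y,z)(DK)(z,x) dz dy dx = −∫ K(x,x) dx. -/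
open MeasureTheory

/-- The kernel of the commutator `[d/dx, T]`:
`(DK)(x,y) = (∂₁K)(x,y) + (∂₂K)(x,y)`. -/
noncomputable def kerD (K : ℝ × ℝ → ℂ) (p : ℝ × ℝ) : ℂ :=
  fderiv ℝ K p (1, 0) + fderiv ℝ K p (0, 1)

/-- The kernel of the commutator `[x, T]`: `(XK)(x,y) = (x − y)K(x,y)`. -/
noncomputable def kerX (K : ℝ × ℝ → ℂ) (p : ℝ × ℝ) : ℂ :=
  ((p.1 - p.2 : ℝ) : ℂ) * K p

/-!
Write `a = ∂₁K`, `b = ∂₂K` and `X` for multiplication by `x − y`, so that `DK = a + b` and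
`XK = X K`. Only traces of compositions of Schwartz kernels are needed, and only these moves:
cyclicity of `Tr(f ∘ g ∘ h)` (Fubini), integration by parts in one
variable, the Leibniz rules `∂₁(XK) = K + Xa` and `∂₂(XK) = Xb − K`, the identity
`(x − y) + (y − z) + (z − x) = 0`, and the contraction `K ∘ K = K`. With `q = Tr(XK ∘ a)` they
give `Tr(K ∘ a ∘ XK) = 0`, `Tr(K ∘ b ∘ XK) = q − Tr K`, `Tr(K ∘ XK ∘ a) = q` and
`Tr(K ∘ XK ∘ b) = 0`, whose alternating sum is `−Tr K`. The term `Tr K` appears exactly where a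
derivative falls on the weight `x − y`.
-/

open SchwartzMap LineDeriv

local notation "∂₁" => LineDeriv.lineDerivOp ((1 : ℝ), (0 : ℝ))
local notation "∂₂" => LineDeriv.lineDerivOp ((0 : ℝ), (1 : ℝ))

theorem integral_integral_integral {α β γ E : Type*} [MeasurableSpace α] [MeasurableSpace β]
    [MeasurableSpace γ] [NormedAddCommGroup E] [NormedSpace ℝ E] {μ : Measure α} {ν : Measure β}
    {ρ : Measure γ} [SFinite μ] [SFinite ν] [SFinite ρ] {F : α × β × γ → E}
    (hF : Integrable F (μ.prod (ν.prod ρ))) :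
    ∫ x, ∫ y, ∫ z, F (x, y, z) ∂ρ ∂ν ∂μ = ∫ p, F p ∂μ.prod (ν.prod ρ) := by
  have hslice : ∀ᵐ x ∂μ, Integrable (fun q => F (x, q)) (ν.prod ρ) := hF.prod_right_ae
  calc ∫ x, ∫ y, ∫ z, F (x, y, z) ∂ρ ∂ν ∂μ = ∫ x, ∫ q, F (x, q) ∂ν.prod ρ ∂μ :=
        integral_congr_ae (hslice.mono fun x hx => integral_integral hx)
    _ = ∫ p, F p ∂μ.prod (ν.prod ρ) := integral_integral hF

noncomputable section

namespace SchwartzMap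

variable {E F V : Type*} [NormedAddCommGroup E] [NormedSpace ℝ E] [NormedAddCommGroup F]
  [NormedSpace ℝ F] [NormedAddCommGroup V] [NormedSpace ℝ V]

theorem _root_.Function.HasTemperateGrowth.prodMk_left (a : E) :
    Function.HasTemperateGrowth (fun y : F => (a, y)) := by
  have h : (fun y : F => (a, y)) = fun y => (a, 0) + ContinuousLinearMap.inr ℝ E F y := by
    ext y <;> simp
  rw [h]
  exact (Function.HasTemperateGrowth.const _).add (ContinuousLinearMap.hasTemperateGrowth _)

theorem _root_.Function.HasTemperateGrowth.prodMk_right (b : F) :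
    Function.HasTemperateGrowth (fun x : E => (x, b)) := by
  have h : (fun x : E => (x, b)) = fun x => (0, b) + ContinuousLinearMap.inl ℝ E F x := by
    ext x <;> simp
  rw [h]
  exact (Function.HasTemperateGrowth.const _).add (ContinuousLinearMap.hasTemperateGrowth _)

def compProdMkLeft (f : 𝓢(E × F, V)) (a : E) : 𝓢(F, V) :=
  compCLM ℝ (Function.HasTemperateGrowth.prodMk_left a)
    ⟨1, 1, fun y => by simpa using (norm_snd_le (a, y)).trans (le_add_of_nonneg_left zero_le_one)⟩
    f

def compProdMkRight (f : 𝓢(E × F, V)) (b : F) : 𝓢(E, V) :=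
  compCLM ℝ (Function.HasTemperateGrowth.prodMk_right b)
    ⟨1, 1, fun x => by simpa using (norm_fst_le (x, b)).trans (le_add_of_nonneg_left zero_le_one)⟩
    f

@[simp]
theorem compProdMkLeft_apply (f : 𝓢(E × F, V)) (a : E) (y : F) :
    compProdMkLeft f a y = f (a, y) := rfl

@[simp]
theorem compProdMkRight_apply (f : 𝓢(E × F, V)) (b : F) (x : E) :
    compProdMkRight f b x = f (x, b) := rfl

theorem lineDerivOp_compProdMkLeft (f : 𝓢(E × F, V)) (a : E) (w : F) :
    ∂_{w} (compProdMkLeft f a) = compProdMkLeft (∂_{((0 : E), w)} f) a := by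
  ext y
  simp [lineDerivOp_apply, lineDeriv]

theorem lineDerivOp_compProdMkRight (f : 𝓢(E × F, V)) (b : F) (v : E) :
    ∂_{v} (compProdMkRight f b) = compProdMkRight (∂_{(v, (0 : F))} f) b := by
  ext x
  simp [lineDerivOp_apply, lineDeriv]

theorem integral_mul_lineDerivOp_fst (f g : 𝓢(ℝ × ℝ, ℂ)) (a b : ℝ) :
    ∫ t, f (a, t) * ∂₁ g (t, b) = -∫ t, ∂₂ f (a, t) * g (t, b) := by
  simpa [lineDerivOp_compProdMkLeft, lineDerivOp_compProdMkRight] using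
    integral_mul_lineDerivOp_right_eq_neg_left (μ := volume)
      (compProdMkLeft f a) (compProdMkRight g b) 1

theorem exists_norm_le_inv_one_add_sq_fst (f : 𝓢(ℝ × ℝ, ℂ)) :
    ∃ C, 0 ≤ C ∧ ∀ x y : ℝ, ‖f (x, y)‖ ≤ C * (1 + x ^ 2)⁻¹ := by
  refine ⟨SchwartzMap.seminorm ℝ 0 0 f + SchwartzMap.seminorm ℝ 2 0 f, by positivity,
    fun x y => ?_⟩
  have h0 := norm_le_seminorm ℝ f (x, y)
  have h2 := norm_pow_mul_le_seminorm ℝ f 2 (x, y)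
  have hx : x ^ 2 ≤ ‖(x, y)‖ ^ 2 := by
    rw [← sq_abs, ← Real.norm_eq_abs]
    exact pow_le_pow_left₀ (norm_nonneg _) (norm_fst_le (x, y)) 2
  rw [← div_eq_mul_inv, le_div_iff₀ (by positivity)]
  nlinarith [norm_nonneg (f (x, y))]

theorem integrable_mul_comp_swap (f g : 𝓢(ℝ × ℝ, ℂ)) :
    Integrable (fun p : ℝ × ℝ => f p * g p.swap) :=
  f.integrable.mul_bdd (by fun_prop) (ae_of_all _ fun p => norm_le_seminorm ℝ g _)

theorem integrable_cyclic_product (f g h : 𝓢(ℝ × ℝ, ℂ)) :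
    Integrable (fun p : ℝ × ℝ × ℝ => f (p.1, p.2.1) * g (p.2.1, p.2.2) * h (p.2.2, p.1)) := by
  obtain ⟨C, hC₀, hC⟩ := f.exists_norm_le_inv_one_add_sq_fst
  have hmaj : Integrable (fun p : ℝ × ℝ × ℝ =>
      C * (1 + p.1 ^ 2)⁻¹ * ‖g p.2‖ * SchwartzMap.seminorm ℝ 0 0 h) :=
    ((integrable_inv_one_add_sq.const_mul C).mul_prod g.integrable.norm).mul_const _
  refine hmaj.mono' (by fun_prop) (ae_of_all _ fun p => ?_)
  rw [norm_mul, norm_mul]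
  gcongr
  exacts [hC _ _, norm_le_seminorm ℝ h _]

end SchwartzMap

namespace SchwartzKernel

def fstSubSnd : ℝ × ℝ →L[ℝ] ℂ :=
  Complex.ofRealCLM.comp (ContinuousLinearMap.fst ℝ ℝ ℝ - ContinuousLinearMap.snd ℝ ℝ ℝ)

theorem fstSubSnd_apply (p : ℝ × ℝ) : fstSubSnd p = ((p.1 - p.2 : ℝ) : ℂ) := rfl

def mulFstSubSnd : 𝓢(ℝ × ℝ, ℂ) →L[ℂ] 𝓢(ℝ × ℝ, ℂ) := smulLeftCLM ℂ fstSubSnd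

theorem mulFstSubSnd_apply (f : 𝓢(ℝ × ℝ, ℂ)) (p : ℝ × ℝ) :
    mulFstSubSnd f p = ((p.1 - p.2 : ℝ) : ℂ) * f p := by
  rw [mulFstSubSnd, smulLeftCLM_apply_apply fstSubSnd.hasTemperateGrowth, smul_eq_mul,
    fstSubSnd_apply]

theorem lineDerivOp_mulFstSubSnd (v : ℝ × ℝ) (f : 𝓢(ℝ × ℝ, ℂ)) :
    ∂_{v} (mulFstSubSnd f) = ((v.1 - v.2 : ℝ) : ℂ) • f + mulFstSubSnd (∂_{v} f) := by
  ext p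
  have h : HasFDerivAt (fun q => fstSubSnd q * f q)
      (fstSubSnd p • fderiv ℝ f p + f p • fstSubSnd) p :=
    fstSubSnd.hasFDerivAt.mul f.differentiableAt.hasFDerivAt
  have e : ⇑(mulFstSubSnd f) = fun q => fstSubSnd q * f q := by
    ext q; rw [mulFstSubSnd_apply, fstSubSnd_apply]
  rw [lineDerivOp_apply_eq_fderiv, e, h.fderiv]
  simp only [fstSubSnd_apply, Complex.ofReal_sub, add_apply, smul_apply, smul_eq_mul,
    mulFstSubSnd_apply, lineDerivOp_apply_eq_fderiv]
  ring

theorem lineDerivOp_fst_mulFstSubSnd (f : 𝓢(ℝ × ℝ, ℂ)) :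
    ∂₁ (mulFstSubSnd f) = f + mulFstSubSnd (∂₁ f) := by
  simpa using lineDerivOp_mulFstSubSnd (1, 0) f

theorem lineDerivOp_snd_mulFstSubSnd (f : 𝓢(ℝ × ℝ, ℂ)) :
    ∂₂ (mulFstSubSnd f) = mulFstSubSnd (∂₂ f) - f := by
  rw [lineDerivOp_mulFstSubSnd]
  simp [sub_eq_neg_add]

/-- `Tr(f ∘ g)` for integral kernels `f`, `g`. -/
def trace₂ (f g : 𝓢(ℝ × ℝ, ℂ)) : ℂ := ∫ x : ℝ, ∫ y : ℝ, f (x, y) * g (y, x)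

/-- `Tr(f ∘ g ∘ h)` for integral kernels `f`, `g`, `h`. -/
def trace₃ (f g h : 𝓢(ℝ × ℝ, ℂ)) : ℂ :=
  ∫ x : ℝ, ∫ y : ℝ, ∫ z : ℝ, f (x, y) * g (y, z) * h (z, x)

variable (f f' g g' h h' : 𝓢(ℝ × ℝ, ℂ))

theorem trace₂_eq_integral : trace₂ f g = ∫ p : ℝ × ℝ, f p * g p.swap :=
  integral_integral (integrable_mul_comp_swap f g)

theorem trace₃_eq_integral :
    trace₃ f g h = ∫ p : ℝ × ℝ × ℝ, f (p.1, p.2.1) * g (p.2.1, p.2.2) * h (p.2.2, p.1) :=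
  integral_integral_integral (integrable_cyclic_product f g h)

theorem trace₂_comm : trace₂ f g = trace₂ g f := by
  rw [trace₂, integral_integral_swap (integrable_mul_comp_swap f g)]
  simp only [trace₂, mul_comm]

theorem trace₃_cyclic : trace₃ f g h = trace₃ g h f := by
  let e : ℝ × ℝ × ℝ ≃ᵐ ℝ × ℝ × ℝ := MeasurableEquiv.prodComm.trans MeasurableEquiv.prodAssoc
  have he : MeasurePreserving e volume volume :=
    volume_preserving_prodAssoc.comp Measure.measurePreserving_swap
  rw [trace₃_eq_integral, trace₃_eq_integral, eq_comm, ← he.integral_comp e.measurableEmbedding]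
  congr 1 with p
  exact (mul_rotate (f (p.1, p.2.1)) _ _).symm

theorem trace₂_sub_left : trace₂ (f - f') g = trace₂ f g - trace₂ f' g := by
  simp only [trace₂_eq_integral, sub_apply, sub_mul]
  exact integral_sub (integrable_mul_comp_swap f g) (integrable_mul_comp_swap f' g)

theorem trace₃_add_left : trace₃ (f + f') g h = trace₃ f g h + trace₃ f' g h := by
  simp only [trace₃_eq_integral, add_apply, add_mul]
  exact integral_add (integrable_cyclic_product f g h) (integrable_cyclic_product f' g h)

theorem trace₃_sub_left : trace₃ (f - f') g h = trace₃ f g h - trace₃ f' g h := by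
  simp only [trace₃_eq_integral, sub_apply, sub_mul]
  exact integral_sub (integrable_cyclic_product f g h) (integrable_cyclic_product f' g h)

theorem trace₃_add_mid : trace₃ f (g + g') h = trace₃ f g h + trace₃ f g' h := by
  rw [trace₃_cyclic f, trace₃_add_left, ← trace₃_cyclic f g h, ← trace₃_cyclic f g' h]

theorem trace₃_add_right : trace₃ f g (h + h') = trace₃ f g h + trace₃ f g h' := by
  rw [← trace₃_cyclic (h + h') f g, trace₃_add_left, trace₃_cyclic h, trace₃_cyclic h']

theorem trace₂_lineDerivOp_fst : trace₂ f (∂₁ g) = -trace₂ (∂₂ f) g := by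
  simp only [trace₂, integral_mul_lineDerivOp_fst, integral_neg]

theorem trace₃_lineDerivOp_fst : trace₃ f g (∂₁ h) = -trace₃ f (∂₂ g) h := by
  simp only [trace₃, mul_assoc, integral_const_mul, integral_mul_lineDerivOp_fst, mul_neg,
    integral_neg]

theorem trace₂_mulFstSubSnd_left :
    trace₂ (mulFstSubSnd f) g = -trace₂ f (mulFstSubSnd g) := by
  simp only [trace₂, mulFstSubSnd_apply, ← integral_neg]
  congr 1 with x
  congr 1 with y
  push_cast
  ring

theorem trace₃_mulFstSubSnd :
    trace₃ (mulFstSubSnd f) g h + trace₃ f (mulFstSubSnd g) h + trace₃ f g (mulFstSubSnd h)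
      = 0 := by
  simp only [trace₃_eq_integral]
  rw [← integral_add (integrable_cyclic_product _ _ _) (integrable_cyclic_product _ _ _),
    ← integral_add ((integrable_cyclic_product _ _ _).fun_add (integrable_cyclic_product _ _ _))
      (integrable_cyclic_product _ _ _)]
  refine integral_eq_zero_of_ae (ae_of_all _ fun p => ?_)
  simp only [mulFstSubSnd_apply, Pi.zero_apply]
  push_cast
  ring

def IsIdempotent (K : 𝓢(ℝ × ℝ, ℂ)) : Prop :=
  ∀ x z : ℝ, ∫ y : ℝ, K (x, y) * K (y, z) = K (x, z)

variable {K : 𝓢(ℝ × ℝ, ℂ)}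

theorem IsIdempotent.integral_mul_eq (hK : IsIdempotent K) (x z : ℝ) :
    ∫ y : ℝ, K (x, y) * K (y, z) = K (x, z) :=
  hK x z

theorem IsIdempotent.trace₂_self (hK : IsIdempotent K) : trace₂ K K = ∫ x : ℝ, K (x, x) := by
  simp only [trace₂, hK.integral_mul_eq]

theorem IsIdempotent.trace₃_left (hK : IsIdempotent K) : trace₃ f K K = trace₂ f K := by
  simp only [trace₃, trace₂, mul_assoc, integral_const_mul, hK.integral_mul_eq]

theorem IsIdempotent.trace₃_right (hK : IsIdempotent K) : trace₃ K K f = trace₂ f K := by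
  rw [← trace₃_cyclic f, hK.trace₃_left]

theorem IsIdempotent.trace₂_mulFstSubSnd_lineDerivOp_snd (hK : IsIdempotent K) :
    trace₂ (mulFstSubSnd (∂₂ K)) K = (∫ x : ℝ, K (x, x)) - trace₂ (mulFstSubSnd K) (∂₁ K) := by
  have h := trace₂_lineDerivOp_fst (mulFstSubSnd K) K
  rw [lineDerivOp_snd_mulFstSubSnd, trace₂_sub_left, hK.trace₂_self] at h
  linear_combination h

theorem IsIdempotent.trace₃_mulFstSubSnd_lineDerivOp_fst (hK : IsIdempotent K) :
    trace₃ K (mulFstSubSnd K) (∂₁ K) = trace₂ (mulFstSubSnd K) (∂₁ K) := by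
  rw [trace₃_lineDerivOp_fst, lineDerivOp_snd_mulFstSubSnd, trace₃_cyclic, trace₃_sub_left,
    hK.trace₃_left, hK.trace₃_left, hK.trace₂_self, hK.trace₂_mulFstSubSnd_lineDerivOp_snd]
  ring

theorem IsIdempotent.trace₃_lineDerivOp_fst_mulFstSubSnd (hK : IsIdempotent K) :
    trace₃ K (∂₁ K) (mulFstSubSnd K) = 0 := by
  have h := trace₃_mulFstSubSnd K (∂₁ K) K
  rw [← trace₃_cyclic K (mulFstSubSnd K), hK.trace₃_mulFstSubSnd_lineDerivOp_fst,
    trace₃_cyclic K (mulFstSubSnd (∂₁ K)), hK.trace₃_left,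
    trace₂_mulFstSubSnd_left (∂₁ K), trace₂_comm (∂₁ K)] at h
  linear_combination h

theorem IsIdempotent.trace₃_lineDerivOp_snd_mulFstSubSnd (hK : IsIdempotent K) :
    trace₃ K (∂₂ K) (mulFstSubSnd K) = trace₂ (mulFstSubSnd K) (∂₁ K) - ∫ x : ℝ, K (x, x) := by
  have h := trace₃_lineDerivOp_fst K K (mulFstSubSnd K)
  rw [lineDerivOp_fst_mulFstSubSnd, trace₃_add_right, hK.trace₃_right, hK.trace₃_right,
    hK.trace₂_self, trace₂_mulFstSubSnd_left, trace₂_comm (∂₁ K)] at h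
  linear_combination h

theorem IsIdempotent.trace₃_mulFstSubSnd_lineDerivOp_snd (hK : IsIdempotent K) :
    trace₃ K (mulFstSubSnd K) (∂₂ K) = 0 := by
  have h := trace₃_lineDerivOp_fst (mulFstSubSnd K) K K
  rw [trace₃_cyclic _ K, hK.trace₃_lineDerivOp_fst_mulFstSubSnd] at h
  rw [trace₃_cyclic]
  linear_combination h

end SchwartzKernel

end

open SchwartzKernel in
/-- Let `K ∈ 𝒮(ℝ×ℝ; ℂ)` be a Schwartz kernel idempotent under kernel
composition.  Then `Tr(K ∘ DK ∘ XK) − Tr(K ∘ XK ∘ DK) = −Tr(K)`, written out as the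
triple-integral identity. -/
theorem statement16 (K : SchwartzMap (ℝ × ℝ) ℂ)
    (hK : ∀ x z : ℝ, (∫ y : ℝ, K (x, y) * K (y, z)) = K (x, z)) :
    (∫ x : ℝ, ∫ y : ℝ, ∫ z : ℝ, K (x, y) * kerD ⇑K (y, z) * kerX ⇑K (z, x))
      - (∫ x : ℝ, ∫ y : ℝ, ∫ z : ℝ, K (x, y) * kerX ⇑K (y, z) * kerD ⇑K (z, x))
      = -∫ x : ℝ, K (x, x) := by
  have hK' : IsIdempotent K := hK
  have hD : ∀ p, kerD ⇑K p = (∂₁ K + ∂₂ K) p := fun p => by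
    simp [kerD, lineDerivOp_apply_eq_fderiv]
  have hX : ∀ p, kerX ⇑K p = mulFstSubSnd K p := fun p => (mulFstSubSnd_apply K p).symm
  simp only [hD, hX]
  change trace₃ K _ _ - trace₃ K _ _ = _
  rw [trace₃_add_mid, trace₃_add_right, hK'.trace₃_lineDerivOp_fst_mulFstSubSnd,
    hK'.trace₃_lineDerivOp_snd_mulFstSubSnd, hK'.trace₃_mulFstSubSnd_lineDerivOp_fst,
    hK'.trace₃_mulFstSubSnd_lineDerivOp_snd]
  ring
end

section
/- Let M be a module over ℂ, Q a quadratic form on M, and Cl = CliffordAlgebra(Q) with canonical embedding ι : M → Cl and grade involution α. For x, ξ ∈ M define the ℂ-linear operator B(x,ξ) on Cl by B(x,ξ)(a) = ι(x)·a + i·α(a)·ι(ξ). Then B(x,ξ)∘B(x,ξ) = (Q(x) + Q(ξ))·id, i.e., for every a ∈ Cl, B(x,ξ)(B(x,ξ)(a)) = (Q(x) + Q(ξ))·a. -/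
/-!
Left multiplication `L a = ι x * a` and graded right multiplication `R a = involute a * ι ξ`
satisfy `L² = Q x`, `R² = -Q ξ` and `L R + R L = 0`, so `(L + i R)² = Q x + Q ξ` whenever `i² = -1`.
-/

/-- The symbol of the Bott–Dirac operator at `(x, ξ)`:
`B(x,ξ)(a) = ι(x)·a + i·α(a)·ι(ξ)`, where `α` is the grade involution. -/
noncomputable def bottSymbol {M : Type*} [AddCommGroup M] [Module ℂ M]
    (Q : QuadraticForm ℂ M) (x ξ : M) (a : CliffordAlgebra Q) : CliffordAlgebra Q :=
  CliffordAlgebra.ι Q x * a +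
    Complex.I • (CliffordAlgebra.involute a * CliffordAlgebra.ι Q ξ)

namespace CliffordAlgebra

variable {R M : Type*} [CommRing R] [AddCommGroup M] [Module R M] (Q : QuadraticForm R M)

theorem ι_mul_ι_mul (x : M) (a : CliffordAlgebra Q) : ι Q x * (ι Q x * a) = Q x • a := by
  rw [← mul_assoc, ι_sq_scalar, Algebra.smul_def]

theorem involute_mul_ι_mul_ι (ξ : M) (a : CliffordAlgebra Q) :
    involute (involute a * ι Q ξ) * ι Q ξ = -(Q ξ • a) := by
  rw [map_mul, involute_involute, involute_ι, mul_neg, neg_mul, mul_assoc, ι_sq_scalar,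
    ← Algebra.commutes, Algebra.smul_def]

theorem ι_mul_involute_mul_ι_add_involute_ι_mul_mul_ι (x ξ : M) (a : CliffordAlgebra Q) :
    ι Q x * (involute a * ι Q ξ) + involute (ι Q x * a) * ι Q ξ = 0 := by
  rw [map_mul, involute_ι, neg_mul, neg_mul, mul_assoc, add_neg_cancel]

theorem ι_mul_add_smul_involute_mul_ι_sq {i : R} (hi : i * i = -1) (x ξ : M)
    (a : CliffordAlgebra Q) :
    ι Q x * (ι Q x * a + i • (involute a * ι Q ξ)) +
        i • (involute (ι Q x * a + i • (involute a * ι Q ξ)) * ι Q ξ) =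
      (Q x + Q ξ) • a := by
  have cross := ι_mul_involute_mul_ι_add_involute_ι_mul_mul_ι Q x ξ a
  rw [mul_add, map_add, add_mul, map_smul, smul_mul_assoc, mul_smul_comm, ι_mul_ι_mul,
    involute_mul_ι_mul_ι, smul_add, smul_smul, hi, neg_one_smul, neg_neg]
  linear_combination (norm := module) i • cross

end CliffordAlgebra

/-- Let `M` be a `ℂ`-module, `Q` a quadratic form on `M`, and
`B(x,ξ)(a) = ι(x)·a + i·α(a)·ι(ξ)` on `CliffordAlgebra Q`.  Then
`B(x,ξ) ∘ B(x,ξ) = (Q(x) + Q(ξ))·id`. -/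
theorem statement18 (M : Type*) [AddCommGroup M] [Module ℂ M]
    (Q : QuadraticForm ℂ M) (x ξ : M) :
    ∀ a : CliffordAlgebra Q,
      bottSymbol Q x ξ (bottSymbol Q x ξ a) = (Q x + Q ξ) • a :=
  CliffordAlgebra.ι_mul_add_smul_involute_mul_ι_sq Q Complex.I_mul_I x ξ
end
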